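/- For any S ⊆ V(G) of a graph G, γ_g^{sp}(G|S) ≤ γ_g(G|S) + 1; moreover, if G is a no-minus graph, then γ_g^{sp}(G|S) = γ_g^{dp}(G|S) = γ_g(G|S). -/

import Mathlib

open Finset

namespace DomGame

open scoped Classical

noncomputable section

variable {V : Type*}

/-- The closed neighborhood of `x` in `G`, as a `Finset`. -/
def closedNbr (G : SimpleGraph V) [Fintype V] (x : V) : Finset V :=
  Finset.univ.filter (fun y => y = x ∨ G.Adj x y)

lemma card_compl_lt (G : SimpleGraph V) [Fintype V] {S : Finset V} {x : V}
    (h : ¬ closedNbr G x ⊆ S) :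
    (Finset.univ \ (S ∪ closedNbr G x)).card < (Finset.univ \ S).card := by
  obtain ⟨v, hvN, hvS⟩ := Finset.not_subset.mp h
  apply Finset.card_lt_card
  have hsub : Finset.univ \ (S ∪ closedNbr G x) ⊆ Finset.univ \ S := by
    intro y hy
    simp only [Finset.mem_sdiff, Finset.mem_univ, Finset.mem_union, true_and, not_or] at hy ⊢
    exact hy.1
  exact (Finset.ssubset_iff_of_subset hsub).mpr ⟨v, by simp [hvS], by simp [hvN]⟩

/-- The value of the (partially dominated) domination game on `G|S`, with
`dom = true` meaning Dominator moves next, `dom = false` meaning Staller moves next.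
A legal move is a vertex whose closed neighborhood contains a yet undominated vertex;
Dominator minimizes, Staller maximizes the total number of moves. -/
def gameVal (G : SimpleGraph V) [Fintype V] (dom : Bool) (S : Finset V) : ℕ :=
  let moves := Finset.univ.filter (fun x => ¬ closedNbr G x ⊆ S)
  if h : moves.Nonempty then
    if dom then
      moves.attach.inf' (by simpa using h)
        (fun x => 1 + gameVal G false (S ∪ closedNbr G x.1))
    else
      moves.attach.sup' (by simpa using h)
        (fun x => 1 + gameVal G true (S ∪ closedNbr G x.1))
  else 0
termination_by (Finset.univ \ S).card
decreasing_by
  · exact card_compl_lt G (by simpa using (Finset.mem_filter.mp x.2).2)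
  · exact card_compl_lt G (by simpa using (Finset.mem_filter.mp x.2).2)

/-- The D-game domination number `γ_g(G)`. -/
def gammaD (G : SimpleGraph V) [Fintype V] : ℕ := gameVal G true ∅

/-- The S-game domination number `γ_g'(G)`. -/
def gammaS (G : SimpleGraph V) [Fintype V] : ℕ := gameVal G false ∅

/-- Value of the Staller-pass domination game on `G|S`: Staller may skip
(at most) one move during the game; the skipped turn is not counted.
`dom` tells whose turn it is, `canPass` whether Staller's pass is still available. -/
def spVal (G : SimpleGraph V) [Fintype V] (dom : Bool) (canPass : Bool) (S : Finset V) : ℕ :=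
  let moves := Finset.univ.filter (fun x => ¬ closedNbr G x ⊆ S)
  if h : moves.Nonempty then
    if dom then
      moves.attach.inf' (by simpa using h)
        (fun x => 1 + spVal G false canPass (S ∪ closedNbr G x.1))
    else
      if hc : canPass then
        max (moves.attach.sup' (by simpa using h)
              (fun x => 1 + spVal G true canPass (S ∪ closedNbr G x.1)))
            (spVal G true false S)
      else
        moves.attach.sup' (by simpa using h)
          (fun x => 1 + spVal G true canPass (S ∪ closedNbr G x.1))
  else 0
termination_by ((Finset.univ \ S).card, if canPass then 1 else 0)
decreasing_by
  · exact Prod.Lex.left _ _ (card_compl_lt G (by simpa using (Finset.mem_filter.mp x.2).2))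
  · exact Prod.Lex.left _ _ (card_compl_lt G (by simpa using (Finset.mem_filter.mp x.2).2))
  · simp only [hc, if_true]
    exact Prod.Lex.right _ (by norm_num)
  · exact Prod.Lex.left _ _ (card_compl_lt G (by simpa using (Finset.mem_filter.mp x.2).2))

/-- Value of the Dominator-pass domination game on `G|S`: Dominator may skip
(at most) one move during the game; the skipped turn is not counted. -/
def dpVal (G : SimpleGraph V) [Fintype V] (dom : Bool) (canPass : Bool) (S : Finset V) : ℕ :=
  let moves := Finset.univ.filter (fun x => ¬ closedNbr G x ⊆ S)
  if h : moves.Nonempty then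
    if dom then
      if hc : canPass then
        min (moves.attach.inf' (by simpa using h)
              (fun x => 1 + dpVal G false canPass (S ∪ closedNbr G x.1)))
            (dpVal G false false S)
      else
        moves.attach.inf' (by simpa using h)
          (fun x => 1 + dpVal G false canPass (S ∪ closedNbr G x.1))
    else
      moves.attach.sup' (by simpa using h)
        (fun x => 1 + dpVal G true canPass (S ∪ closedNbr G x.1))
  else 0
termination_by ((Finset.univ \ S).card, if canPass then 1 else 0)
decreasing_by
  · exact Prod.Lex.left _ _ (card_compl_lt G (by simpa using (Finset.mem_filter.mp x.2).2))
  · simp only [hc, if_true]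
    exact Prod.Lex.right _ (by norm_num)
  · exact Prod.Lex.left _ _ (card_compl_lt G (by simpa using (Finset.mem_filter.mp x.2).2))
  · exact Prod.Lex.left _ _ (card_compl_lt G (by simpa using (Finset.mem_filter.mp x.2).2))

/-- The graph `G_{uv}`: obtained from `G - uv` by adding two new vertices
`u' = Sum.inr false` and `v' = Sum.inr true` together with the edges `u v'` and `v u'`. -/
def cutGraph (G : SimpleGraph V) (u v : V) : SimpleGraph (V ⊕ Bool) :=
  SimpleGraph.fromRel (fun x y =>
    match x, y with
    | Sum.inl a, Sum.inl b => G.Adj a b ∧ ¬ (a = u ∧ b = v) ∧ ¬ (a = v ∧ b = u)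
    | Sum.inl a, Sum.inr b => (b = false ∧ a = v) ∨ (b = true ∧ a = u)
    | _, _ => False)

/-- The set of vertices of `G_{uv}` declared dominated, given that `B ⊆ V(G)` is
declared dominated: `B` together with the two new vertices `u'` and `v'`. -/
def cutDom [DecidableEq V] (B : Finset V) : Finset (V ⊕ Bool) :=
  B.image Sum.inl ∪ {Sum.inr false, Sum.inr true}

/-- Disjoint union of two simple graphs. -/
def disjUnion {α β : Type*} (G : SimpleGraph α) (H : SimpleGraph β) :
    SimpleGraph (α ⊕ β) :=
  SimpleGraph.fromRel (fun x y =>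
    match x, y with
    | Sum.inl a, Sum.inl b => G.Adj a b
    | Sum.inr a, Sum.inr b => H.Adj a b
    | _, _ => False)

/-- The disjoint union of `k` paths, the `i`-th on `size i` vertices
(consecutive vertices of each `Fin (size i)` being adjacent). -/
def sigmaPathGraph (k : ℕ) (size : Fin k → ℕ) :
    SimpleGraph (Σ i : Fin k, Fin (size i)) :=
  SimpleGraph.fromRel (fun x y => x.1 = y.1 ∧ x.2.val + 1 = y.2.val)

/-- Vertex set of the three-legged spider `T_{p,q,r}`:
the center together with three legs on `4p`, `4q` and `4r` vertices. -/
abbrev SpiderV (p q r : ℕ) := Unit ⊕ (Fin (4*p) ⊕ (Fin (4*q) ⊕ Fin (4*r)))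

/-- The three-legged spider `T_{p,q,r}`, obtained from paths `P_{4p+1}`, `P_{4q+1}`,
`P_{4r+1}` by identifying one end-vertex of each into the center. In each leg,
vertex `0` is adjacent to the center, and vertices `i`, `i+1` are adjacent. -/
def spider (p q r : ℕ) : SimpleGraph (SpiderV p q r) :=
  SimpleGraph.fromRel (fun x y =>
    match x, y with
    | Sum.inl _, Sum.inr (Sum.inl i) => i.val = 0
    | Sum.inl _, Sum.inr (Sum.inr (Sum.inl i)) => i.val = 0
    | Sum.inl _, Sum.inr (Sum.inr (Sum.inr i)) => i.val = 0
    | Sum.inr (Sum.inl i), Sum.inr (Sum.inl j) => i.val + 1 = j.val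
    | Sum.inr (Sum.inr (Sum.inl i)), Sum.inr (Sum.inr (Sum.inl j)) => i.val + 1 = j.val
    | Sum.inr (Sum.inr (Sum.inr i)), Sum.inr (Sum.inr (Sum.inr j)) => i.val + 1 = j.val
    | _, _ => False)

/-- The weight `w(P'_{4q+r}) = w(P''_{4q+r}) = 2q + c_r` with
`c_0 = 0`, `c_1 = 1`, `c_2 = 3/2`, `c_3 = 7/4`, as a function of `n = 4q + r`. -/
def pathWeight (n : ℕ) : ℚ :=
  2 * (n / 4 : ℕ) +
    (if n % 4 = 0 then 0 else if n % 4 = 1 then 1 else if n % 4 = 2 then 3/2 else 7/4)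

/-!
All three games are evaluated by backward induction on the set of dominated vertices. An extra
option can only help the player who gets it, so `γ_g^{dp} ≤ γ_g ≤ γ_g^{sp}`. A Staller pass on
`G|T` replaces the S-game value `γ_g'(G|T)` by the D-game value `γ_g(G|T)`, so it gains her at
most `max_T (γ_g(G|T) - γ_g'(G|T))`: at most `1` by the continuation principle, and nothing on a
no-minus graph; dually a Dominator pass cannot help him on a no-minus graph. The continuation
principle (dominating more vertices never lengthens the game) holds because on `B ⊇ A` Dominator
can imitate his moves on `A`, replacing a move that has become illegal by an arbitrary one.
-/

theorem _root_.Finset.inf'_attach {β α : Type*} [SemilatticeInf α] (s : Finset β)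
    (hs : s.attach.Nonempty) (f : β → α) :
    s.attach.inf' hs (fun x => f x) = s.inf' (attach_nonempty_iff.mp hs) f :=
  (inf'_comp_eq_map (f := Function.Embedding.subtype (· ∈ s)) f hs).trans
    (inf'_congr _ attach_map_val fun _ _ => rfl)

theorem _root_.Finset.sup'_attach {β α : Type*} [SemilatticeSup α] (s : Finset β)
    (hs : s.attach.Nonempty) (f : β → α) :
    s.attach.sup' hs (fun x => f x) = s.sup' (attach_nonempty_iff.mp hs) f :=
  (sup'_comp_eq_map (f := Function.Embedding.subtype (· ∈ s)) f hs).trans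
    (sup'_congr _ attach_map_val fun _ _ => rfl)

section

variable [Fintype V] (G : SimpleGraph V)

def legalMoves (S : Finset V) : Finset V :=
  univ.filter fun x => ¬ closedNbr G x ⊆ S

theorem induction_on_legalMoves {P : Finset V → Prop}
    (step : ∀ S, (∀ x ∈ legalMoves G S, P (S ∪ closedNbr G x)) → P S) (S : Finset V) :
    P S :=
  step S fun x _ => induction_on_legalMoves step (S ∪ closedNbr G x)
termination_by (univ \ S).card
decreasing_by exact card_compl_lt G (mem_filter.mp ‹x ∈ legalMoves G S›).2

variable {G}

section Unfold

variable {S : Finset V}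

theorem gameVal_of_not_nonempty (h : ¬ (legalMoves G S).Nonempty) (d : Bool) :
    gameVal G d S = 0 := by
  rw [gameVal]; simp_all [legalMoves]

theorem gameVal_true (h : (legalMoves G S).Nonempty) :
    gameVal G true S =
      (legalMoves G S).inf' h fun x => 1 + gameVal G false (S ∪ closedNbr G x) := by
  rw [legalMoves] at h
  rw [gameVal, dif_pos h, if_pos rfl]
  exact inf'_attach _ _ fun x => 1 + gameVal G false (S ∪ closedNbr G x)

theorem gameVal_false (h : (legalMoves G S).Nonempty) :
    gameVal G false S =
      (legalMoves G S).sup' h fun x => 1 + gameVal G true (S ∪ closedNbr G x) := by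
  rw [legalMoves] at h
  rw [gameVal, dif_pos h, if_neg Bool.false_ne_true]
  exact sup'_attach _ _ fun x => 1 + gameVal G true (S ∪ closedNbr G x)

theorem spVal_of_not_nonempty (h : ¬ (legalMoves G S).Nonempty) (d c : Bool) :
    spVal G d c S = 0 := by
  rw [spVal]; simp_all [legalMoves]

theorem spVal_true (h : (legalMoves G S).Nonempty) (c : Bool) :
    spVal G true c S =
      (legalMoves G S).inf' h fun x => 1 + spVal G false c (S ∪ closedNbr G x) := by
  rw [legalMoves] at h
  rw [spVal, dif_pos h, if_pos rfl]
  exact inf'_attach _ _ fun x => 1 + spVal G false c (S ∪ closedNbr G x)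

theorem spVal_false_true (h : (legalMoves G S).Nonempty) :
    spVal G false true S =
      max ((legalMoves G S).sup' h fun x => 1 + spVal G true true (S ∪ closedNbr G x))
      (spVal G true false S) := by
  rw [legalMoves] at h
  rw [spVal, dif_pos h, if_neg Bool.false_ne_true, dif_pos rfl,
    sup'_attach _ _ fun x => 1 + spVal G true true (S ∪ closedNbr G x)]
  rfl

theorem spVal_false_false (h : (legalMoves G S).Nonempty) :
    spVal G false false S =
      (legalMoves G S).sup' h fun x => 1 + spVal G true false (S ∪ closedNbr G x) := by
  rw [legalMoves] at h
  rw [spVal, dif_pos h, if_neg Bool.false_ne_true, dif_neg Bool.false_ne_true]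
  exact sup'_attach _ _ fun x => 1 + spVal G true false (S ∪ closedNbr G x)

theorem dpVal_of_not_nonempty (h : ¬ (legalMoves G S).Nonempty) (d c : Bool) :
    dpVal G d c S = 0 := by
  rw [dpVal]; simp_all [legalMoves]

theorem dpVal_true_true (h : (legalMoves G S).Nonempty) :
    dpVal G true true S =
      min ((legalMoves G S).inf' h fun x => 1 + dpVal G false true (S ∪ closedNbr G x))
      (dpVal G false false S) := by
  rw [legalMoves] at h
  rw [dpVal, dif_pos h, if_pos rfl, dif_pos rfl,
    inf'_attach _ _ fun x => 1 + dpVal G false true (S ∪ closedNbr G x)]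
  rfl

theorem dpVal_true_false (h : (legalMoves G S).Nonempty) :
    dpVal G true false S =
      (legalMoves G S).inf' h fun x => 1 + dpVal G false false (S ∪ closedNbr G x) := by
  rw [legalMoves] at h
  rw [dpVal, dif_pos h, if_pos rfl, dif_neg Bool.false_ne_true]
  exact inf'_attach _ _ fun x => 1 + dpVal G false false (S ∪ closedNbr G x)

theorem dpVal_false (h : (legalMoves G S).Nonempty) (c : Bool) :
    dpVal G false c S =
      (legalMoves G S).sup' h fun x => 1 + dpVal G true c (S ∪ closedNbr G x) := by
  rw [legalMoves] at h
  rw [dpVal, dif_pos h, if_neg Bool.false_ne_true]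
  exact sup'_attach _ _ fun x => 1 + dpVal G true c (S ∪ closedNbr G x)

end Unfold

theorem legalMoves_anti {A B : Finset V} (hAB : A ⊆ B) : legalMoves G B ⊆ legalMoves G A :=
  fun _ hx => by
    simp only [legalMoves, mem_filter] at hx ⊢
    exact ⟨hx.1, fun h => hx.2 (h.trans hAB)⟩

theorem gameVal_true_le {S : Finset V} {x : V} (hx : x ∈ legalMoves G S) :
    gameVal G true S ≤ 1 + gameVal G false (S ∪ closedNbr G x) := by
  rw [gameVal_true ⟨x, hx⟩]
  exact inf'_le (fun x => 1 + gameVal G false (S ∪ closedNbr G x)) hx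

theorem le_gameVal_false {S : Finset V} {x : V} (hx : x ∈ legalMoves G S) :
    1 + gameVal G true (S ∪ closedNbr G x) ≤ gameVal G false S := by
  rw [gameVal_false ⟨x, hx⟩]
  exact le_sup' (fun x => 1 + gameVal G true (S ∪ closedNbr G x)) hx

theorem exists_legalMoves_union_subset {A B : Finset V} (hAB : A ⊆ B) {x : V}
    (hB : (legalMoves G B).Nonempty) :
    ∃ y ∈ legalMoves G B, A ∪ closedNbr G x ⊆ B ∪ closedNbr G y := by
  by_cases hx : x ∈ legalMoves G B
  · exact ⟨x, hx, union_subset_union_left hAB⟩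
  · obtain ⟨y, hy⟩ := hB
    have hxB : closedNbr G x ⊆ B := by simpa [legalMoves] using hx
    exact ⟨y, hy, (union_subset hAB hxB).trans subset_union_left⟩

theorem gameVal_antitone {A B : Finset V} (hAB : A ⊆ B) (d : Bool) :
    gameVal G d B ≤ gameVal G d A := by
  induction A using induction_on_legalMoves G generalizing B d with
  | step A ih =>
  by_cases hB : (legalMoves G B).Nonempty
  swap; · rw [gameVal_of_not_nonempty hB]; exact Nat.zero_le _
  have hA : (legalMoves G A).Nonempty := hB.mono (legalMoves_anti hAB)
  cases d with
  | true =>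
    rw [gameVal_true hA]
    refine le_inf' _ _ fun x hx => ?_
    obtain ⟨y, hy, hxy⟩ := exists_legalMoves_union_subset (x := x) hAB hB
    calc gameVal G true B ≤ 1 + gameVal G false (B ∪ closedNbr G y) :=
          gameVal_true_le hy
      _ ≤ 1 + gameVal G false (A ∪ closedNbr G x) := by gcongr; exact ih x hx hxy false
  | false =>
    rw [gameVal_false hB]
    refine sup'_le _ _ fun y hy => ?_
    calc 1 + gameVal G true (B ∪ closedNbr G y)
        ≤ 1 + gameVal G true (A ∪ closedNbr G y) := by
          gcongr; exact ih y (legalMoves_anti hAB hy) (union_subset_union_left hAB) true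
      _ ≤ gameVal G false A := le_gameVal_false (legalMoves_anti hAB hy)

theorem gameVal_true_le_gameVal_false_add_one (S : Finset V) :
    gameVal G true S ≤ gameVal G false S + 1 := by
  by_cases h : (legalMoves G S).Nonempty
  swap; · rw [gameVal_of_not_nonempty h]; exact Nat.zero_le _
  obtain ⟨x, hx⟩ := h
  calc gameVal G true S ≤ 1 + gameVal G false (S ∪ closedNbr G x) := gameVal_true_le hx
    _ ≤ gameVal G false S + 1 := by
        rw [add_comm]; gcongr; exact gameVal_antitone subset_union_left false

theorem spVal_false_eq_gameVal (S : Finset V) (d : Bool) : spVal G d false S = gameVal G d S := by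
  induction S using induction_on_legalMoves G generalizing d with
  | step S ih =>
  by_cases h : (legalMoves G S).Nonempty
  swap; · rw [spVal_of_not_nonempty h, gameVal_of_not_nonempty h]
  cases d with
  | true =>
    rw [spVal_true h, gameVal_true h]
    exact inf'_congr _ rfl fun x hx => by rw [ih x hx]
  | false =>
    rw [spVal_false_false h, gameVal_false h]
    exact sup'_congr _ rfl fun x hx => by rw [ih x hx]

theorem dpVal_false_eq_gameVal (S : Finset V) (d : Bool) : dpVal G d false S = gameVal G d S := by
  induction S using induction_on_legalMoves G generalizing d with
  | step S ih =>
  by_cases h : (legalMoves G S).Nonempty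
  swap; · rw [dpVal_of_not_nonempty h, gameVal_of_not_nonempty h]
  cases d with
  | true =>
    rw [dpVal_true_false h, gameVal_true h]
    exact inf'_congr _ rfl fun x hx => by rw [ih x hx]
  | false =>
    rw [dpVal_false h, gameVal_false h]
    exact sup'_congr _ rfl fun x hx => by rw [ih x hx]

theorem gameVal_le_spVal (S : Finset V) (d : Bool) : gameVal G d S ≤ spVal G d true S := by
  induction S using induction_on_legalMoves G generalizing d with
  | step S ih =>
  by_cases h : (legalMoves G S).Nonempty
  swap; · rw [spVal_of_not_nonempty h, gameVal_of_not_nonempty h]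
  cases d with
  | true =>
    rw [spVal_true h, gameVal_true h]
    exact inf'_mono_fun fun x hx => by gcongr; exact ih x hx false
  | false =>
    rw [spVal_false_true h, gameVal_false h]
    exact le_max_of_le_left <| sup'_mono_fun fun x hx => by gcongr; exact ih x hx true

theorem dpVal_le_gameVal (S : Finset V) (d : Bool) : dpVal G d true S ≤ gameVal G d S := by
  induction S using induction_on_legalMoves G generalizing d with
  | step S ih =>
  by_cases h : (legalMoves G S).Nonempty
  swap; · rw [dpVal_of_not_nonempty h, gameVal_of_not_nonempty h]
  cases d with
  | true =>
    rw [dpVal_true_true h, gameVal_true h]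
    exact min_le_of_left_le <| inf'_mono_fun fun x hx => by gcongr; exact ih x hx false
  | false =>
    rw [dpVal_false h, gameVal_false h]
    exact sup'_mono_fun fun x hx => by gcongr; exact ih x hx true

theorem spVal_le_gameVal_add {k : ℕ} (hk : ∀ T, gameVal G true T ≤ gameVal G false T + k)
    (S : Finset V) (d : Bool) : spVal G d true S ≤ gameVal G d S + k := by
  induction S using induction_on_legalMoves G generalizing d with
  | step S ih =>
  by_cases h : (legalMoves G S).Nonempty
  swap; · rw [spVal_of_not_nonempty h]; exact Nat.zero_le _
  cases d with
  | true =>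
    obtain ⟨x, hx, hmin⟩ :=
      exists_mem_eq_inf' h fun x => 1 + gameVal G false (S ∪ closedNbr G x)
    rw [spVal_true h, gameVal_true h, hmin]
    calc _ ≤ 1 + spVal G false true (S ∪ closedNbr G x) := inf'_le _ hx
      _ ≤ 1 + gameVal G false (S ∪ closedNbr G x) + k := by
          rw [add_assoc]; gcongr; exact ih x hx false
  | false =>
    rw [spVal_false_true h, spVal_false_eq_gameVal]
    refine max_le (sup'_le _ _ fun x hx => ?_) (hk S)
    calc 1 + spVal G true true (S ∪ closedNbr G x)
        ≤ 1 + gameVal G true (S ∪ closedNbr G x) + k := by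
          rw [add_assoc]; gcongr; exact ih x hx true
      _ ≤ gameVal G false S + k := by gcongr; exact le_gameVal_false hx

def NoMinus (G : SimpleGraph V) : Prop :=
  ∀ T : Finset V, gameVal G true T ≤ gameVal G false T

theorem gameVal_le_dpVal (hG : NoMinus G) (S : Finset V) (d : Bool) :
    gameVal G d S ≤ dpVal G d true S := by
  induction S using induction_on_legalMoves G generalizing d with
  | step S ih =>
  by_cases h : (legalMoves G S).Nonempty
  swap; · rw [dpVal_of_not_nonempty h, gameVal_of_not_nonempty h]
  cases d with
  | true =>
    rw [dpVal_true_true h, dpVal_false_eq_gameVal]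
    refine le_min ?_ (hG S)
    rw [gameVal_true h]
    exact inf'_mono_fun fun x hx => by gcongr; exact ih x hx false
  | false =>
    rw [dpVal_false h, gameVal_false h]
    exact sup'_mono_fun fun x hx => by gcongr; exact ih x hx true

end

/-- For any `S ⊆ V(G)`, `γ_g^{sp}(G|S) ≤ γ_g(G|S) + 1`; moreover, if `G` is
no-minus, then `γ_g^{sp}(G|S) = γ_g^{dp}(G|S) = γ_g(G|S)`. -/
theorem pass_game_bounds {V : Type*} [Fintype V] (G : SimpleGraph V) (S : Finset V) :
    spVal G true true S ≤ gameVal G true S + 1 ∧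
    ((∀ T : Finset V, gameVal G true T ≤ gameVal G false T) →
      spVal G true true S = dpVal G true true S ∧
      dpVal G true true S = gameVal G true S) := by
  refine ⟨spVal_le_gameVal_add gameVal_true_le_gameVal_false_add_one S true, fun hG => ?_⟩
  have hsp : spVal G true true S = gameVal G true S :=
    le_antisymm (spVal_le_gameVal_add (k := 0) hG S true) (gameVal_le_spVal S true)
  have hdp : dpVal G true true S = gameVal G true S :=
    le_antisymm (dpVal_le_gameVal S true) (gameVal_le_dpVal hG S true)
  exact ⟨hsp.trans hdp.symm, hdp⟩

end

end DomGame
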